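/- Let G : ℝ^N → [0,∞) be supported in the closed unit ball with ∫ G = 1, and let f : [0,∞) → ℝ be C¹ with f(0) = 0. For a unit vector ν, define θ(ν) = ∫_0^1 f(∫_{{z·ν ≥ t}} G(z) dz) dt. Then ∫_{{z : z·ν ≥ 0}} f'(∫_{{v : (v−z)·ν ≥ 0}} G(v) dv) G(z) (z·ν) dz = θ(ν). -/

import Mathlib

open MeasureTheory
open scoped RealInnerProductSpace

private lemma euclid_coord_le_norm {m : ℕ} (x : EuclideanSpace ℝ (Fin m)) (i : Fin m) :
    |x i| ≤ ‖x‖ := by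
  rw [EuclideanSpace.norm_eq]
  have h1 : |x i| = Real.sqrt (‖x i‖ ^ 2) := by
    rw [Real.sqrt_sq (norm_nonneg _), Real.norm_eq_abs]
  rw [h1]
  exact Real.sqrt_le_sqrt (Finset.single_le_sum
    (f := fun j => ‖x j‖ ^ 2) (fun j _ => sq_nonneg _) (Finset.mem_univ i))

private lemma change_var {n : ℕ}
    (e : EuclideanSpace ℝ (Fin (n+1)) ≃ₗᵢ[ℝ] EuclideanSpace ℝ (Fin (n+1)))
    (H : EuclideanSpace ℝ (Fin (n+1)) → ℝ) (hH : Integrable H) :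
    ∫ z, H z = ∫ t : ℝ, ∫ w : Fin n → ℝ,
      H (e.symm ((MeasurableEquiv.toLp 2 (Fin (n+1) → ℝ)) (Fin.insertNth 0 t w))) := by
  set Ψm : (ℝ × (Fin n → ℝ)) ≃ᵐ EuclideanSpace ℝ (Fin (n+1)) :=
    ((MeasurableEquiv.piFinSuccAbove (fun _ : Fin (n+1) => ℝ) 0).symm.trans
      (MeasurableEquiv.toLp 2 (Fin (n+1) → ℝ))).trans
      e.symm.toHomeomorph.toMeasurableEquiv with hΨm
  have hmp : MeasurePreserving (⇑Ψm) volume volume :=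
    (e.symm.measurePreserving).comp
      (((EuclideanSpace.volume_preserving_symm_measurableEquiv_toLp (Fin (n+1))).symm).comp
        ((volume_preserving_piFinSuccAbove (fun _ : Fin (n+1) => ℝ) 0).symm _))
  rw [← hmp.integral_comp Ψm.measurableEmbedding H]
  have hint : Integrable (fun p : ℝ × (Fin n → ℝ) => H (Ψm p)) volume :=
    (hmp.integrable_comp_emb Ψm.measurableEmbedding).mpr hH
  rw [Measure.volume_eq_prod] at hint
  have hvol : ∫ p : ℝ × (Fin n → ℝ), H (Ψm p)
      = ∫ p : ℝ × (Fin n → ℝ), H (Ψm p) ∂(volume.prod volume) := by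
    rw [← Measure.volume_eq_prod]
  rw [hvol, integral_prod _ hint]
  refine integral_congr_ae (Filter.Eventually.of_forall fun t => ?_)
  refine integral_congr_ae (Filter.Eventually.of_forall fun w => ?_)
  rfl

theorem statement2 (N : ℕ) (hN : 1 < N)
    (G : EuclideanSpace ℝ (Fin N) → ℝ)
    (hGsmooth : ContDiff ℝ (⊤ : ℕ∞) G)
    (hG0 : ∀ z, 0 ≤ G z)
    (hGsupp : ∀ z, G z ≠ 0 → ‖z‖ ≤ 1)
    (hGeven : ∀ z, G (-z) = G z)
    (hGmass : ∫ z, G z = 1)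
    (f : ℝ → ℝ)
    (hf : ContDiff ℝ 1 f)
    (hfmono : Monotone f)
    (hf0 : f 0 = 0)
    (ν : EuclideanSpace ℝ (Fin N)) (hν : ‖ν‖ = 1) :
    ∫ z in {z : EuclideanSpace ℝ (Fin N) | 0 ≤ ⟪z, ν⟫},
        deriv f (∫ v in {v : EuclideanSpace ℝ (Fin N) | 0 ≤ ⟪v - z, ν⟫}, G v) * G z * ⟪z, ν⟫
      = ∫ t in (0:ℝ)..1, f (∫ z in {z : EuclideanSpace ℝ (Fin N) | t ≤ ⟪z, ν⟫}, G z) := by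
  obtain ⟨n, rfl⟩ : ∃ n, N = n + 1 := ⟨N - 1, by omega⟩
  -- basic facts on G
  have hGcont : Continuous G := hGsmooth.continuous
  have hGcs : HasCompactSupport G := by
    apply HasCompactSupport.intro (isCompact_closedBall (0 : EuclideanSpace ℝ (Fin (n+1))) 1)
    intro x hx
    by_contra h
    exact hx (Metric.mem_closedBall.mpr (by simpa [dist_eq_norm] using hGsupp x h))
  have hGint : Integrable G := hGcont.integrable_of_hasCompactSupport hGcs
  obtain ⟨C, hC⟩ : ∃ C, ∀ x, ‖G x‖ ≤ C := hGcont.bounded_above_of_compact_support hGcs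
  -- the isometry sending ν to the first basis vector
  set e₀ : EuclideanSpace ℝ (Fin (n+1)) := EuclideanSpace.single 0 1 with he₀def
  have he₀ : ‖e₀‖ = 1 := by simp [he₀def, EuclideanSpace.norm_single]
  set e : EuclideanSpace ℝ (Fin (n+1)) ≃ₗᵢ[ℝ] EuclideanSpace ℝ (Fin (n+1)) :=
    Submodule.reflection (ℝ ∙ (ν - e₀))ᗮ with hedef
  have heν : e ν = e₀ := Submodule.reflection_sub (by rw [hν, he₀])
  set Ψ : ℝ × (Fin n → ℝ) → EuclideanSpace ℝ (Fin (n+1)) := fun p =>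
    e.symm ((MeasurableEquiv.toLp 2 (Fin (n+1) → ℝ)) (Fin.insertNth 0 p.1 p.2)) with hΨdef
  have hApp : ∀ (x : Fin (n+1) → ℝ) (i : Fin (n+1)),
      ((MeasurableEquiv.toLp 2 (Fin (n+1) → ℝ)) x) i = x i := by
    intro x i
    rw [MeasurableEquiv.coe_toLp]
  -- (A) inner product coordinate
  have hΨinner : ∀ t w, ⟪Ψ (t, w), ν⟫ = t := by
    intro t w
    have h1 : ⟪Ψ (t, w), ν⟫
        = ⟪(MeasurableEquiv.toLp 2 (Fin (n+1) → ℝ)) (Fin.insertNth 0 t w), e ν⟫ := by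
      conv_lhs => rw [show ν = e.symm (e ν) from (e.symm_apply_apply ν).symm]
      exact e.symm.inner_map_map _ _
    rw [h1, heν, he₀def, EuclideanSpace.inner_single_right]
    simp [hApp, Fin.insertNth_apply_same]
  -- (B) norm bounds
  have hΨnorm : ∀ t w (i : Fin (n+1)), |Fin.insertNth (0 : Fin (n+1)) t w i| ≤ ‖Ψ (t, w)‖ := by
    intro t w i
    rw [hΨdef]
    simp only [LinearIsometryEquiv.norm_map]
    have := euclid_coord_le_norm
      ((MeasurableEquiv.toLp 2 (Fin (n+1) → ℝ)) (Fin.insertNth 0 t w)) i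
    rwa [hApp] at this
  have hΨt : ∀ t w, |t| ≤ ‖Ψ (t, w)‖ := by
    intro t w
    have := hΨnorm t w 0
    rwa [Fin.insertNth_apply_same] at this
  have hΨw : ∀ t w (j : Fin n), |w j| ≤ ‖Ψ (t, w)‖ := by
    intro t w j
    have := hΨnorm t w ((0 : Fin (n+1)).succAbove j)
    rwa [Fin.insertNth_apply_succAbove] at this
  -- (C) change of variables
  have hchange : ∀ H : EuclideanSpace ℝ (Fin (n+1)) → ℝ, Integrable H →
      ∫ z, H z = ∫ t : ℝ, ∫ w : Fin n → ℝ, H (Ψ (t, w)) := by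
    intro H hH
    exact change_var e H hH
  -- (D) continuity of Ψ
  have hinsertcont : Continuous (fun p : ℝ × (Fin n → ℝ) =>
      (Fin.insertNth (0 : Fin (n+1)) p.1 p.2 : Fin (n+1) → ℝ)) := by
    apply continuous_pi
    intro i
    rcases Fin.eq_zero_or_eq_succ i with rfl | ⟨j, rfl⟩
    · simp only [Fin.insertNth_apply_same]
      exact continuous_fst
    · simp only [Fin.insertNth_zero, Fin.cons_succ, cast_eq]
      exact (continuous_apply j).comp continuous_snd
  have hΨcont : Continuous Ψ := by
    rw [hΨdef]
    refine e.symm.continuous.comp (Continuous.comp ?_ hinsertcont)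
    rw [MeasurableEquiv.coe_toLp]
    exact PiLp.continuous_toLp 2 _
  -- slice density ρ
  set ρ : ℝ → ℝ := fun t => ∫ w : Fin n → ℝ, G (Ψ (t, w)) with hρdef
  have hρ0 : ∀ t : ℝ, 1 < |t| → ρ t = 0 := by
    intro t ht
    have hz : ∀ w : Fin n → ℝ, G (Ψ (t, w)) = 0 := by
      intro w
      by_contra h
      have h1 := hGsupp _ h
      have h2 := hΨt t w
      linarith
    simp [hρdef, hz]
  have hρnn : ∀ t, 0 ≤ ρ t := fun t => integral_nonneg fun w => hG0 _
  have hGΨzero : ∀ (t : ℝ) (w : Fin n → ℝ), w ∉ Metric.closedBall (0 : Fin n → ℝ) 1 →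
      G (Ψ (t, w)) = 0 := by
    intro t w hw
    by_contra h
    apply hw
    rw [Metric.mem_closedBall, dist_zero_right]
    rw [pi_norm_le_iff_of_nonneg zero_le_one]
    intro j
    calc ‖w j‖ ≤ ‖Ψ (t, w)‖ := hΨw t w j
    _ ≤ 1 := hGsupp _ h
  have hρcont : Continuous ρ := by
    rw [hρdef]
    apply continuous_of_dominated (bound := Set.indicator (Metric.closedBall (0 : Fin n → ℝ) 1)
      (fun _ => C))
    · intro t
      exact ((hGcont.comp (hΨcont.comp (Continuous.prodMk_right t))).aestronglyMeasurable)
    · intro t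
      refine Filter.Eventually.of_forall fun w => ?_
      by_cases hw : w ∈ Metric.closedBall (0 : Fin n → ℝ) 1
      · rw [Set.indicator_of_mem hw]
        exact hC _
      · rw [Set.indicator_of_notMem hw, hGΨzero t w hw]
        simp
    · refine IntegrableOn.integrable_indicator ?_ measurableSet_closedBall
      exact integrableOn_const measure_closedBall_lt_top.ne
    · refine Filter.Eventually.of_forall fun w => ?_
      exact hGcont.comp (hΨcont.comp (continuous_id.prodMk continuous_const))
  have hρint : Integrable ρ := by
    apply hρcont.integrable_of_hasCompactSupport
    apply HasCompactSupport.intro (isCompact_Icc (a := (-1:ℝ)) (b := 1))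
    intro t ht
    apply hρ0
    rw [Set.mem_Icc] at ht
    have h2 : t < -1 ∨ 1 < t := by
      by_contra hc
      push_neg at hc
      exact ht ⟨hc.1, hc.2⟩
    rcases h2 with h | h
    · rw [abs_of_neg (by linarith)]; linarith
    · rw [abs_of_pos (by linarith)]; exact h
  -- the cumulative function F
  set F : ℝ → ℝ := fun t => (∫ s, ρ s) - ∫ s in Set.Iic t, ρ s with hFdef
  have hFIoi : ∀ t, F t = ∫ s in Set.Ioi t, ρ s := by
    intro t
    have h1 := integral_add_compl (measurableSet_Iic (a := t)) hρint
    rw [Set.compl_Iic] at h1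
    have h2 : F t = (∫ s, ρ s) - ∫ s in Set.Iic t, ρ s := rfl
    rw [h2]
    linarith
  have hinner : Continuous fun z : EuclideanSpace ℝ (Fin (n+1)) => ⟪z, ν⟫ :=
    Continuous.inner continuous_id continuous_const
  have hSmeas : ∀ t : ℝ, MeasurableSet {z : EuclideanSpace ℝ (Fin (n+1)) | t ≤ ⟪z, ν⟫} :=
    fun t => (isClosed_le continuous_const hinner).measurableSet
  -- F equals the set integral of G
  have hFeq : ∀ t : ℝ,
      (∫ z in {z : EuclideanSpace ℝ (Fin (n+1)) | t ≤ ⟪z, ν⟫}, G z) = F t := by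
    intro t
    set χ : ℝ → ℝ := Set.indicator (Set.Ici t) (fun _ => (1:ℝ)) with hχdef
    have hind : ∀ z : EuclideanSpace ℝ (Fin (n+1)),
        Set.indicator {z : EuclideanSpace ℝ (Fin (n+1)) | t ≤ ⟪z, ν⟫} G z = χ ⟪z, ν⟫ * G z := by
      intro z
      simp only [hχdef, Set.indicator_apply, Set.mem_setOf_eq, Set.mem_Ici]
      by_cases hz : t ≤ ⟪z, ν⟫ <;> simp [hz]
    have hHint : Integrable (fun z : EuclideanSpace ℝ (Fin (n+1)) => χ ⟪z, ν⟫ * G z) := by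
      apply Integrable.mono' hGint
      · exact (((measurable_const.indicator measurableSet_Ici).comp hinner.measurable).mul
          hGcont.measurable).aestronglyMeasurable
      · refine Filter.Eventually.of_forall fun z => ?_
        rw [norm_mul]
        by_cases hz : ⟪z, ν⟫ ∈ Set.Ici t
        · rw [hχdef, Set.indicator_of_mem hz]
          simp [Real.norm_eq_abs, abs_of_nonneg (hG0 z)]
        · rw [hχdef, Set.indicator_of_notMem hz]
          simp [hG0 z]
    calc (∫ z in {z : EuclideanSpace ℝ (Fin (n+1)) | t ≤ ⟪z, ν⟫}, G z)
        = ∫ z, Set.indicator {z : EuclideanSpace ℝ (Fin (n+1)) | t ≤ ⟪z, ν⟫} G z :=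
          (integral_indicator (hSmeas t)).symm
    _ = ∫ z, χ ⟪z, ν⟫ * G z := by
          refine integral_congr_ae (Filter.Eventually.of_forall fun z => ?_)
          exact hind z
    _ = ∫ s, ∫ w, χ ⟪Ψ (s, w), ν⟫ * G (Ψ (s, w)) := hchange _ hHint
    _ = ∫ s, χ s * ρ s := by
          refine integral_congr_ae (Filter.Eventually.of_forall fun s => ?_)
          simp_rw [hΨinner]
          simp only [hρdef]
          exact integral_const_mul _ _
    _ = ∫ s in Set.Ici t, ρ s := by
          rw [← integral_indicator measurableSet_Ici]
          refine integral_congr_ae (Filter.Eventually.of_forall fun s => ?_)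
          simp only [hχdef, Set.indicator_apply, Set.mem_Ici]
          by_cases hs : t ≤ s <;> simp [hs]
    _ = ∫ s in Set.Ioi t, ρ s := by
          rw [Measure.restrict_congr_set (Ioi_ae_eq_Ici (a := t))]
    _ = F t := (hFIoi t).symm
  -- derivative of F
  have hIic : ∀ t : ℝ, (∫ s in Set.Iic t, ρ s)
      = (∫ s in Set.Iic (0:ℝ), ρ s) + ∫ s in (0:ℝ)..t, ρ s := by
    intro t
    have := intervalIntegral.integral_Iic_sub_Iic (hρint.integrableOn) (hρint.integrableOn)
      (a := (0:ℝ)) (b := t)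
    linarith
  have hFderiv : ∀ t : ℝ, HasDerivAt F (-ρ t) t := by
    intro t
    have h1 : HasDerivAt (fun u => ∫ s in (0:ℝ)..u, ρ s) (ρ t) t :=
      intervalIntegral.integral_hasDerivAt_right (hρcont.intervalIntegrable _ _)
        (hρcont.stronglyMeasurableAtFilter _ _) hρcont.continuousAt
    have h2 : F = fun u => ((∫ s, ρ s) - ∫ s in Set.Iic (0:ℝ), ρ s) - ∫ s in (0:ℝ)..u, ρ s := by
      funext u
      have h3 : F u = (∫ s, ρ s) - ∫ s in Set.Iic u, ρ s := rfl
      rw [h3, hIic u]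
      ring
    rw [h2]
    have h4 := (hasDerivAt_const t ((∫ s, ρ s) - ∫ s in Set.Iic (0:ℝ), ρ s)).sub h1
    rw [zero_sub] at h4
    exact h4
  have hFdiff : Differentiable ℝ F := fun t => (hFderiv t).differentiableAt
  have hFcont : Continuous F := hFdiff.continuous
  have hF1 : F 1 = 0 := by
    rw [hFIoi]
    exact setIntegral_eq_zero_of_forall_eq_zero fun s hs =>
      hρ0 s (by rw [Set.mem_Ioi] at hs; rw [abs_of_pos (by linarith)]; exact hs)
  -- facts about f
  have hf'cont : Continuous (deriv f) := hf.continuous_deriv le_rfl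
  have hfd : ∀ x, HasDerivAt f (deriv f x) x := fun x =>
    ((hf.differentiable (by norm_num)) x).hasDerivAt
  -- φ
  set φ : ℝ → ℝ := fun s => deriv f (F s) * max s 0 with hφdef
  have hφcont : Continuous φ := (hf'cont.comp hFcont).mul (continuous_id.max continuous_const)
  -- LHS computation
  have hLHS : (∫ z in {z : EuclideanSpace ℝ (Fin (n+1)) | 0 ≤ ⟪z, ν⟫},
        deriv f (∫ v in {v : EuclideanSpace ℝ (Fin (n+1)) | 0 ≤ ⟪v - z, ν⟫}, G v) * G z * ⟪z, ν⟫)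
      = ∫ t in (0:ℝ)..1, φ t * ρ t := by
    have hsets : ∀ z : EuclideanSpace ℝ (Fin (n+1)),
        {v : EuclideanSpace ℝ (Fin (n+1)) | 0 ≤ ⟪v - z, ν⟫}
          = {v : EuclideanSpace ℝ (Fin (n+1)) | ⟪z, ν⟫ ≤ ⟪v, ν⟫} := by
      intro z
      ext v
      simp only [Set.mem_setOf_eq, inner_sub_left, sub_nonneg]
    have step1 : (∫ z in {z : EuclideanSpace ℝ (Fin (n+1)) | 0 ≤ ⟪z, ν⟫},
          deriv f (∫ v in {v : EuclideanSpace ℝ (Fin (n+1)) | 0 ≤ ⟪v - z, ν⟫}, G v)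
            * G z * ⟪z, ν⟫)
        = ∫ z, φ ⟪z, ν⟫ * G z := by
      rw [← integral_indicator (hSmeas 0)]
      refine integral_congr_ae (Filter.Eventually.of_forall fun z => ?_)
      simp only [Set.indicator_apply, Set.mem_setOf_eq]
      by_cases hz : (0:ℝ) ≤ ⟪z, ν⟫
      · rw [if_pos hz, hsets z, hFeq ⟪z, ν⟫]
        simp only [hφdef]
        rw [max_eq_left hz]
        ring
      · rw [if_neg hz]
        simp only [hφdef]
        rw [max_eq_right (le_of_not_ge hz)]
        ring
    have hHc : Continuous (fun z : EuclideanSpace ℝ (Fin (n+1)) => φ ⟪z, ν⟫ * G z) :=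
      (hφcont.comp hinner).mul hGcont
    have hHcs : HasCompactSupport (fun z : EuclideanSpace ℝ (Fin (n+1)) => φ ⟪z, ν⟫ * G z) := by
      apply HasCompactSupport.intro (isCompact_closedBall (0 : EuclideanSpace ℝ (Fin (n+1))) 1)
      intro x hx
      have hGx : G x = 0 := by
        by_contra h
        exact hx (Metric.mem_closedBall.mpr (by simpa [dist_eq_norm] using hGsupp x h))
      rw [hGx, mul_zero]
    have hHint : Integrable (fun z : EuclideanSpace ℝ (Fin (n+1)) => φ ⟪z, ν⟫ * G z) :=
      hHc.integrable_of_hasCompactSupport hHcs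
    rw [step1, hchange _ hHint]
    have step2 : ∀ t : ℝ, (∫ w : Fin n → ℝ, φ ⟪Ψ (t, w), ν⟫ * G (Ψ (t, w))) = φ t * ρ t := by
      intro t
      simp_rw [hΨinner]
      simp only [hρdef]
      exact integral_const_mul _ _
    simp_rw [step2]
    have hvanish : ∀ t ∉ Set.Ioc (0:ℝ) 1, φ t * ρ t = 0 := by
      intro t ht
      rw [Set.mem_Ioc] at ht
      push_neg at ht
      rcases le_or_gt t 0 with h | h
      · simp only [hφdef]
        rw [max_eq_right h]
        ring
      · rw [hρ0 t (by rw [abs_of_pos h]; exact ht h), mul_zero]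
    rw [← setIntegral_eq_integral_of_forall_compl_eq_zero hvanish,
      intervalIntegral.integral_of_le zero_le_one]
  -- RHS computation
  have hRHS : (∫ t in (0:ℝ)..1,
        f (∫ z in {z : EuclideanSpace ℝ (Fin (n+1)) | t ≤ ⟪z, ν⟫}, G z))
      = ∫ t in (0:ℝ)..1, φ t * ρ t := by
    have hcong : (∫ t in (0:ℝ)..1,
          f (∫ z in {z : EuclideanSpace ℝ (Fin (n+1)) | t ≤ ⟪z, ν⟫}, G z))
        = ∫ t in (0:ℝ)..1, f (F t) :=
      intervalIntegral.integral_congr fun t _ => by rw [hFeq]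
    rw [hcong]
    set u : ℝ → ℝ := fun t => t * f (F t) with hudef
    have hu : ∀ t : ℝ, HasDerivAt u (f (F t) - t * (deriv f (F t) * ρ t)) t := by
      intro t
      have h1 : HasDerivAt (fun s : ℝ => s) 1 t := hasDerivAt_id t
      have h2 : HasDerivAt (fun s => f (F s)) (deriv f (F t) * -ρ t) t :=
        (hfd (F t)).comp t (hFderiv t)
      have h3 := h1.mul h2
      simp only [one_mul] at h3
      refine h3.congr_deriv ?_
      ring
    have hcont1 : Continuous fun t => f (F t) := hf.continuous.comp hFcont
    have hcont2 : Continuous fun t => t * (deriv f (F t) * ρ t) :=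
      continuous_id.mul ((hf'cont.comp hFcont).mul hρcont)
    have key : (∫ t in (0:ℝ)..1, (f (F t) - t * (deriv f (F t) * ρ t))) = u 1 - u 0 := by
      apply intervalIntegral.integral_eq_sub_of_hasDerivAt (fun t _ => hu t)
      exact (hcont1.sub hcont2).intervalIntegrable _ _
    have hu10 : u 1 - u 0 = 0 := by
      simp only [hudef]
      rw [hF1, hf0]
      ring
    rw [intervalIntegral.integral_sub (hcont1.intervalIntegrable _ _)
      (hcont2.intervalIntegrable _ _)] at key
    have hsplit : (∫ t in (0:ℝ)..1, f (F t))
        = ∫ t in (0:ℝ)..1, t * (deriv f (F t) * ρ t) := by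
      rw [hu10] at key
      linarith
    rw [hsplit]
    apply intervalIntegral.integral_congr
    intro t ht
    rw [Set.uIcc_of_le zero_le_one, Set.mem_Icc] at ht
    simp only [hφdef]
    rw [max_eq_left ht.1]
    ring
  rw [hLHS, hRHS]
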